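/- For $a>1$ and $j\in\mathbb{N}$ let $\widehat{\xi}_j^a(k)=\prod_{r=j+1}^{\infty}\nu^{r,a}_k$. Then $\lim_{j\to\infty}\sup_{a>1}\sum_{k\in\mathbb{Z}}k^2\Big|\widehat{\xi}_j^a(k)-\exp\big(-\tfrac{k^2+a^2}{ja}\big)\Big|^2=0$, and for the same double-indexed quantity $\lim_{a\to\infty}\sup_{j\in\mathbb{N}}\sum_{k\in\mathbb{Z}}k^2\Big|\widehat{\xi}_j^a(k)-\exp\big(-\tfrac{k^2+a^2}{ja}\big)\Big|^2=0$. -/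

import Mathlib

open Filter
open Finset

noncomputable section

/-- The masks ν^{j,a}_k of Lebedeva–Prestin: `ν^{1,a}_k = √(1/2)` (2-periodic), and for `j ≥ 2`
it is given by `exp(-(k²+a²)/(j(j-1)a))` for `k = -2^{j-2}+1, …, 2^{j-2}` and by
`√(1-exp(-2((k-2^{j-1})²+a²)/(j(j-1)a)))` for `k = 2^{j-2}+1, …, 3·2^{j-2}`, extended
`2^j`-periodically in `k` (here `k'` is the representative of `k` modulo `2^j` lying in
`[-2^{j-2}+1, 3·2^{j-2}]`). -/
def nu (j : ℕ) (a : ℝ) (k : ℤ) : ℝ :=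
  if j ≤ 1 then Real.sqrt (1 / 2)
  else
    let m : ℤ := 2 ^ (j - 2)
    let k' : ℤ := (k + m - 1) % (2 ^ j) - m + 1
    if k' ≤ m then
      Real.exp (-(((k' : ℝ) ^ 2 + a ^ 2) / ((j : ℝ) * ((j : ℝ) - 1) * a)))
    else
      Real.sqrt (1 - Real.exp (-(2 * (((k' : ℝ) - 2 ^ (j - 1)) ^ 2 + a ^ 2) /
        ((j : ℝ) * ((j : ℝ) - 1) * a))))

/-- `ξ̂ⱼᵃ(k) = ∏_{r=j+1}^∞ ν^{r,a}_k`. -/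
lemma nu_nonneg (j : ℕ) (a : ℝ) (k : ℤ) : 0 ≤ nu j a k := by
  unfold nu
  split
  · positivity
  · dsimp only
    split
    · positivity
    · positivity

lemma nu_le_one (j : ℕ) {a : ℝ} (ha : 0 < a) (k : ℤ) : nu j a k ≤ 1 := by
  unfold nu
  split
  · exact Real.sqrt_le_one.mpr (by norm_num)
  · rename_i hj
    dsimp only
    split
    · apply Real.exp_le_one_iff.mpr
      have h2 : 2 ≤ j := by omega
      have hj2 : (2:ℝ) ≤ (j:ℝ) := by exact_mod_cast h2
      have hj1 : (0:ℝ) < (j:ℝ) - 1 := by linarith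
      have hj0 : (0:ℝ) < (j:ℝ) := by linarith
      have hja : (0:ℝ) < (j : ℝ) * ((j : ℝ) - 1) * a := by positivity
      rw [neg_nonpos]
      exact div_nonneg (by positivity) hja.le
    · exact Real.sqrt_le_one.mpr (sub_le_self _ (Real.exp_pos _).le)

lemma nu_eq_exp {j : ℕ} (hj : 2 ≤ j) (a : ℝ) {k : ℤ} (hk : k.natAbs + 1 ≤ 2 ^ (j - 2)) :
    nu j a k = Real.exp (-(((k : ℝ) ^ 2 + a ^ 2) / ((j : ℝ) * ((j : ℝ) - 1) * a))) := by
  have hm : (k.natAbs : ℤ) + 1 ≤ 2 ^ (j - 2) := by exact_mod_cast hk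
  have h1 : k ≤ (2 ^ (j - 2) : ℤ) - 1 := by omega
  have h2 : -(2 ^ (j - 2) : ℤ) + 1 ≤ k := by omega
  have hpow : (2 : ℤ) ^ (j - 2) * 4 = 2 ^ j := by
    nth_rewrite 2 [show j = (j - 2) + 2 by omega]
    rw [pow_add]; ring
  have hmpos : (0:ℤ) < 2 ^ (j - 2) := by positivity
  unfold nu
  rw [if_neg (by omega)]
  dsimp only
  have hmod : (k + 2 ^ (j - 2) - 1) % 2 ^ j = k + 2 ^ (j - 2) - 1 :=
    Int.emod_eq_of_lt (by omega) (by omega)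
  rw [hmod]
  rw [if_pos (by omega)]
  congr 2
  push_cast
  ring

lemma hasSum_telescope {j : ℕ} (hj : 2 ≤ j) :
    HasSum (fun r : ℕ => 1 / (((j + r : ℕ) : ℝ) * (((j + r : ℕ) : ℝ) - 1)))
      (1 / ((j : ℝ) - 1)) := by
  have hterm : ∀ r : ℕ, 1 / (((j + r : ℕ) : ℝ) * (((j + r : ℕ) : ℝ) - 1))
      = 1 / ((j : ℝ) + r - 1) - 1 / ((j : ℝ) + r) := by
    intro r
    have h1 : (0:ℝ) < (j:ℝ) + r - 1 := by
      have : (2:ℝ) ≤ (j:ℝ) := by exact_mod_cast hj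
      have : (0:ℝ) ≤ (r:ℝ) := Nat.cast_nonneg r
      linarith
    have h2 : (0:ℝ) < (j:ℝ) + r := by linarith
    push_cast
    field_simp
    ring
  have hnonneg : ∀ r : ℕ, 0 ≤ 1 / (((j + r : ℕ) : ℝ) * (((j + r : ℕ) : ℝ) - 1)) := by
    intro r
    rw [hterm r]
    have h1 : (0:ℝ) < (j:ℝ) + r - 1 := by
      have : (2:ℝ) ≤ (j:ℝ) := by exact_mod_cast hj
      have : (0:ℝ) ≤ (r:ℝ) := Nat.cast_nonneg r
      linarith
    have h2 : (0:ℝ) < (j:ℝ) + r := by linarith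
    have := one_div_le_one_div_of_le h1 (by linarith : (j:ℝ) + r - 1 ≤ (j:ℝ) + r)
    linarith
  rw [hasSum_iff_tendsto_nat_of_nonneg hnonneg]
  have hsum : ∀ n : ℕ, ∑ r ∈ range n, (1 / (((j + r : ℕ) : ℝ) * (((j + r : ℕ) : ℝ) - 1)))
      = 1 / ((j : ℝ) - 1) - 1 / ((j : ℝ) + n - 1) := by
    intro n
    rw [show ∑ r ∈ range n, 1 / (((j + r : ℕ) : ℝ) * (((j + r : ℕ) : ℝ) - 1))
        = ∑ r ∈ range n, ((fun i : ℕ => 1 / ((j : ℝ) + i - 1)) r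
            - (fun i : ℕ => 1 / ((j : ℝ) + i - 1)) (r + 1)) from
      Finset.sum_congr rfl fun r _ => by
        simp only []
        rw [hterm r]
        push_cast
        ring]
    rw [Finset.sum_range_sub']
    norm_num
  simp only [hsum]
  have htt : Tendsto (fun n : ℕ => ((j : ℝ) + n - 1)) atTop atTop :=
    tendsto_atTop_add_const_right _ _
      (tendsto_atTop_add_const_left _ _ tendsto_natCast_atTop_atTop)
  have hz : Tendsto (fun n : ℕ => 1 / ((j : ℝ) + n - 1)) atTop (nhds 0) := by
    simpa [one_div, Function.comp_def] using tendsto_inv_atTop_zero.comp htt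
  simpa using tendsto_const_nhds.sub hz

lemma hasProd_tail {j : ℕ} (hj : 2 ≤ j) {a : ℝ} (ha : 0 < a) {k : ℤ}
    (hk : k.natAbs + 1 ≤ 2 ^ (j - 2)) :
    HasProd (fun r : ℕ => nu (j + r) a k)
      (Real.exp (-(((k : ℝ) ^ 2 + a ^ 2) / (((j : ℝ) - 1) * a)))) := by
  have hj2 : (2:ℝ) ≤ (j:ℝ) := by exact_mod_cast hj
  have hsum : HasSum (fun r : ℕ => -(((k : ℝ) ^ 2 + a ^ 2)
      / (((j + r : ℕ) : ℝ) * (((j + r : ℕ) : ℝ) - 1) * a)))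
      (-(((k : ℝ) ^ 2 + a ^ 2) / (((j : ℝ) - 1) * a))) := by
    have base := (hasSum_telescope hj).mul_left (-(((k : ℝ) ^ 2 + a ^ 2) / a))
    have hfe : (fun r : ℕ => -(((k : ℝ) ^ 2 + a ^ 2)
          / (((j + r : ℕ) : ℝ) * (((j + r : ℕ) : ℝ) - 1) * a)))
        = fun r : ℕ => -(((k : ℝ) ^ 2 + a ^ 2) / a)
            * (1 / (((j + r : ℕ) : ℝ) * (((j + r : ℕ) : ℝ) - 1))) := by
      funext r
      have h1 : (2:ℝ) ≤ ((j + r : ℕ) : ℝ) := by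
        push_cast
        have : (0:ℝ) ≤ (r:ℝ) := Nat.cast_nonneg r
        linarith
      have h2 : ((j + r : ℕ) : ℝ) ≠ 0 := by linarith
      have h3 : ((j + r : ℕ) : ℝ) - 1 ≠ 0 := by
        intro h; rw [sub_eq_zero] at h; rw [h] at h1; norm_num at h1
      field_simp
    have hve : -(((k : ℝ) ^ 2 + a ^ 2) / (((j : ℝ) - 1) * a))
        = -(((k : ℝ) ^ 2 + a ^ 2) / a) * (1 / ((j : ℝ) - 1)) := by
      rw [mul_comm ((j:ℝ) - 1) a, ← div_div, div_eq_mul_one_div (((k:ℝ) ^ 2 + a ^ 2) / a),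
        neg_mul]
    rw [hfe, hve]
    exact base
  have hp := hsum.rexp
  have hfn : (fun r : ℕ => nu (j + r) a k)
      = Real.exp ∘ fun r : ℕ => -(((k : ℝ) ^ 2 + a ^ 2)
          / (((j + r : ℕ) : ℝ) * (((j + r : ℕ) : ℝ) - 1) * a)) := by
    funext r
    have hk' : k.natAbs + 1 ≤ 2 ^ (j + r - 2) :=
      le_trans hk (Nat.pow_le_pow_right (by norm_num) (by omega))
    rw [Function.comp_apply, nu_eq_exp (by omega) a hk']
  rw [hfn]
  exact hp


def xiHat (j : ℕ) (a : ℝ) (k : ℤ) : ℝ := ∏' r : ℕ, nu (j + 1 + r) a k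

lemma hasProd_xiHat {j : ℕ} (hj : 1 ≤ j) {a : ℝ} (ha : 0 < a) {k : ℤ} (n : ℕ)
    (hn : k.natAbs + 1 ≤ 2 ^ (j + n - 1)) :
    HasProd (fun r : ℕ => nu (j + 1 + r) a k)
      ((∏ r ∈ range n, nu (j + 1 + r) a k)
        * Real.exp (-(((k : ℝ) ^ 2 + a ^ 2) / (((j : ℝ) + n) * a)))) := by
  have htail : HasProd (fun r : ℕ => nu (j + 1 + (r + n)) a k)
      (Real.exp (-(((k : ℝ) ^ 2 + a ^ 2) / (((j : ℝ) + n) * a)))) := by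
    have h2 : 2 ≤ j + 1 + n := by omega
    have hk' : k.natAbs + 1 ≤ 2 ^ (j + 1 + n - 2) := by
      rwa [show j + 1 + n - 2 = j + n - 1 by omega]
    have hcast : (((j + 1 + n : ℕ) : ℝ) - 1) = (j : ℝ) + n := by push_cast; ring
    have h := hasProd_tail h2 ha hk'
    rw [hcast] at h
    have hidx : (fun r : ℕ => nu (j + 1 + (r + n)) a k)
        = fun r : ℕ => nu (j + 1 + n + r) a k := by
      funext r; congr 1; omega
    rw [hidx]
    exact h
  exact HasProd.prod_range_mul (f := fun r : ℕ => nu (j + 1 + r) a k) htail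

lemma xiHat_eq_of_small {j : ℕ} (hj : 1 ≤ j) {a : ℝ} (ha : 0 < a) {k : ℤ}
    (hk : k.natAbs + 1 ≤ 2 ^ (j - 1)) :
    xiHat j a k = Real.exp (-(((k : ℝ) ^ 2 + a ^ 2) / ((j : ℝ) * a))) := by
  have h := hasProd_xiHat hj ha 0 (by simpa using hk)
  rw [xiHat, h.tprod_eq]
  norm_num

lemma xiHat_nonneg {j : ℕ} (hj : 1 ≤ j) {a : ℝ} (ha : 0 < a) {k : ℤ} (n : ℕ)
    (hn : k.natAbs + 1 ≤ 2 ^ (j + n - 1)) : 0 ≤ xiHat j a k := by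
  have h := hasProd_xiHat hj ha n hn
  rw [xiHat, h.tprod_eq]
  exact mul_nonneg (Finset.prod_nonneg fun r _ => nu_nonneg _ _ _) (Real.exp_pos _).le

lemma xiHat_le {j : ℕ} (hj : 1 ≤ j) {a : ℝ} (ha : 0 < a) {k : ℤ} (n : ℕ)
    (hn : k.natAbs + 1 ≤ 2 ^ (j + n - 1)) :
    xiHat j a k ≤ Real.exp (-(((k : ℝ) ^ 2 + a ^ 2) / (((j : ℝ) + n) * a))) := by
  have h := hasProd_xiHat hj ha n hn
  rw [xiHat, h.tprod_eq]
  apply mul_le_of_le_one_left (Real.exp_pos _).le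
  exact Finset.prod_le_one (fun r _ => nu_nonneg _ _ _) (fun r _ => nu_le_one _ ha _)

/-- The critical scale exponent. -/
def cep (k : ℤ) : ℕ := Nat.clog 2 (k.natAbs + 1) + 1

lemma cep_pos (k : ℤ) : 0 < cep k := Nat.succ_pos _

lemma le_cep {j : ℕ} {k : ℤ} (hj : 1 ≤ j) (hk : 2 ^ (j - 1) ≤ k.natAbs) : j ≤ cep k := by
  have h1 : 2 ^ (j - 1) ≤ k.natAbs + 1 := by omega
  have h2 : Nat.clog 2 (2 ^ (j - 1)) ≤ Nat.clog 2 (k.natAbs + 1) := Nat.clog_mono_right _ h1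
  rw [Nat.clog_pow 2 (j - 1) (by norm_num)] at h2
  unfold cep; omega

lemma natAbs_lt_pow_cep (k : ℤ) : k.natAbs + 1 ≤ 2 ^ (cep k - 1) := by
  have := Nat.le_pow_clog (b := 2) (by norm_num) (k.natAbs + 1)
  simpa [cep] using this

lemma sq_aux : ∀ m : ℕ, (m + 2) ^ 2 ≤ 2 ^ (m + 4) := by
  intro m
  induction m with
  | zero => norm_num
  | succ m ih =>
    have h1 : m + 1 ≤ 2 ^ m := Nat.lt_two_pow_self
    have h2 : 2 * m + 5 ≤ 2 ^ (m + 4) := by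
      calc 2 * m + 5 ≤ 16 * (m + 1) := by omega
        _ ≤ 16 * 2 ^ m := Nat.mul_le_mul_left 16 h1
        _ = 2 ^ (m + 4) := by rw [pow_add]; ring
    calc (m + 1 + 2) ^ 2 = (m + 2) ^ 2 + (2 * m + 5) := by ring
      _ ≤ 2 ^ (m + 4) + 2 ^ (m + 4) := by omega
      _ = 2 ^ (m + 1 + 4) := by rw [pow_succ]; ring

lemma sq_cep_le {k : ℤ} (hk : 1 ≤ k.natAbs) : (cep k) ^ 2 ≤ 16 * k.natAbs := by
  set n := k.natAbs
  have hL : 0 < Nat.clog 2 (n + 1) := Nat.clog_pos (by norm_num) (by omega)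
  set L := Nat.clog 2 (n + 1) with hLdef
  have hlow : 2 ^ (L - 1) < n + 1 := Nat.pow_pred_clog_lt_self (by norm_num) (by omega)
  have h := sq_aux (L - 1)
  have hc : cep k = L + 1 := rfl
  have hLL : L - 1 + 2 = L + 1 := by omega
  rw [hLL] at h
  calc (cep k) ^ 2 = (L + 1) ^ 2 := by rw [hc]
    _ ≤ 2 ^ (L - 1 + 4) := h
    _ = 16 * 2 ^ (L - 1) := by rw [pow_add]; ring
    _ ≤ 16 * n := by
        have : 2 ^ (L - 1) ≤ n := by omega
        omega

lemma cep_le_sqrt {k : ℤ} (hk : 1 ≤ k.natAbs) :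
    (cep k : ℝ) ≤ 4 * Real.sqrt (k.natAbs : ℝ) := by
  have h := sq_cep_le hk
  have hr : ((cep k : ℝ)) ^ 2 ≤ (4 * Real.sqrt (k.natAbs : ℝ)) ^ 2 := by
    have hsq : Real.sqrt (k.natAbs : ℝ) ^ 2 = (k.natAbs : ℝ) :=
      Real.sq_sqrt (Nat.cast_nonneg _)
    have : ((cep k : ℝ)) ^ 2 ≤ 16 * (k.natAbs : ℝ) := by exact_mod_cast h
    calc ((cep k : ℝ)) ^ 2 ≤ 16 * (k.natAbs : ℝ) := this
      _ = (4 * Real.sqrt (k.natAbs : ℝ)) ^ 2 := by rw [mul_pow, hsq]; ring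
  have h1 : (0:ℝ) ≤ (cep k : ℝ) := Nat.cast_nonneg _
  have h2 : (0:ℝ) ≤ 4 * Real.sqrt (k.natAbs : ℝ) := by positivity
  exact pow_le_pow_iff_left₀ h1 h2 (by norm_num) |>.mp hr

lemma abs_diff_le {j : ℕ} (hj : 1 ≤ j) {a : ℝ} (ha : 0 < a) {k : ℤ}
    (hk : 2 ^ (j - 1) ≤ k.natAbs) :
    |xiHat j a k - Real.exp (-(((k : ℝ) ^ 2 + a ^ 2) / ((j : ℝ) * a)))|
      ≤ Real.exp (-(((k : ℝ) ^ 2 + a ^ 2) / ((cep k : ℝ) * a))) := by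
  have hjc : j ≤ cep k := le_cep hj hk
  set n := cep k - j with hn
  have hjn : j + n = cep k := by omega
  have hcond : k.natAbs + 1 ≤ 2 ^ (j + n - 1) := by
    rw [show j + n - 1 = cep k - 1 by omega]
    exact natAbs_lt_pow_cep k
  have h0 := xiHat_nonneg hj ha n hcond
  have h1 := xiHat_le hj ha n hcond
  have hcast : ((j : ℝ) + n) = (cep k : ℝ) := by
    rw [← hjn]; push_cast; ring
  rw [hcast] at h1
  set B := Real.exp (-(((k : ℝ) ^ 2 + a ^ 2) / ((cep k : ℝ) * a))) with hB
  have hg0 : (0:ℝ) < Real.exp (-(((k : ℝ) ^ 2 + a ^ 2) / ((j : ℝ) * a))) := Real.exp_pos _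
  have hg1 : Real.exp (-(((k : ℝ) ^ 2 + a ^ 2) / ((j : ℝ) * a))) ≤ B := by
    rw [hB]
    apply Real.exp_le_exp.mpr
    rw [neg_le_neg_iff]
    apply div_le_div_of_nonneg_left (by positivity) (by positivity : (0:ℝ) < (j:ℝ) * a)
    have : (j : ℝ) ≤ (cep k : ℝ) := by exact_mod_cast hjc
    have ha' : 0 ≤ a := ha.le
    nlinarith
  rw [abs_le]
  constructor <;> nlinarith

/-- Pointwise upper bound, with `a`-decay. -/
def Bnd (a : ℝ) (k : ℤ) : ℝ :=
  (k : ℝ) ^ 2 * Real.exp (-(Real.sqrt (k.natAbs : ℝ) / 2 + a / (cep k : ℝ)))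

/-- Summable majorant. -/
def Maj (k : ℤ) : ℝ := (k : ℝ) ^ 2 * Real.exp (-(Real.sqrt (k.natAbs : ℝ) / 2))

lemma Bnd_nonneg (a : ℝ) (k : ℤ) : 0 ≤ Bnd a k := by
  unfold Bnd; positivity

lemma Maj_nonneg (k : ℤ) : 0 ≤ Maj k := by
  unfold Maj; positivity

lemma Bnd_le_Maj {a : ℝ} (ha : 0 ≤ a) (k : ℤ) : Bnd a k ≤ Maj k := by
  unfold Bnd Maj
  apply mul_le_mul_of_nonneg_left _ (by positivity)
  apply Real.exp_le_exp.mpr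
  have : 0 ≤ a / (cep k : ℝ) := by positivity
  linarith

lemma term_le_Bnd {j : ℕ} (hj : 1 ≤ j) {a : ℝ} (ha : 1 < a) {k : ℤ}
    (hk : 2 ^ (j - 1) ≤ k.natAbs) :
    (k : ℝ) ^ 2 * (xiHat j a k - Real.exp (-(((k : ℝ) ^ 2 + a ^ 2) / ((j : ℝ) * a)))) ^ 2
      ≤ Bnd a k := by
  have ha0 : (0:ℝ) < a := by linarith
  have h := abs_diff_le hj ha0 hk
  have hknat : 1 ≤ k.natAbs := le_trans Nat.one_le_two_pow hk
  have hc0 : (0:ℝ) < (cep k : ℝ) := by exact_mod_cast cep_pos k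
  set s := Real.sqrt (k.natAbs : ℝ) with hs
  have hssq : s ^ 2 = (k.natAbs : ℝ) := Real.sq_sqrt (by positivity)
  have hs0 : 0 ≤ s := Real.sqrt_nonneg _
  have hs1 : (1:ℝ) ≤ s := by
    have h1 : (1:ℝ) ≤ (k.natAbs : ℝ) := by exact_mod_cast hknat
    nlinarith
  have hk2 : (k : ℝ) ^ 2 = s ^ 4 := by
    have : ((k.natAbs : ℝ)) = |(k : ℝ)| := by
      rw [← Int.cast_abs, Int.abs_eq_natAbs, Int.cast_natCast]
    have h2 : (k : ℝ) ^ 2 = ((k.natAbs : ℝ)) ^ 2 := by rw [this, sq_abs]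
    rw [h2, ← hssq]; ring
  have hsq : (xiHat j a k - Real.exp (-(((k : ℝ) ^ 2 + a ^ 2) / ((j : ℝ) * a)))) ^ 2
      ≤ Real.exp (-(((k : ℝ) ^ 2 + a ^ 2) / ((cep k : ℝ) * a))) ^ 2 := by
    rw [← sq_abs]
    exact pow_le_pow_left₀ (abs_nonneg _) h 2
  have hexp : Real.exp (-(((k : ℝ) ^ 2 + a ^ 2) / ((cep k : ℝ) * a))) ^ 2
      ≤ Real.exp (-(s / 2 + a / (cep k : ℝ))) := by
    rw [sq, ← Real.exp_add]
    apply Real.exp_le_exp.mpr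
    have h1 : a / (cep k : ℝ) ≤ ((k : ℝ) ^ 2 + a ^ 2) / ((cep k : ℝ) * a) := by
      rw [div_le_div_iff₀ hc0 (by positivity)]
      nlinarith [sq_nonneg (k : ℝ)]
    have hc4 := cep_le_sqrt hknat
    rw [← hs] at hc4
    have h2 : s / 2 ≤ ((k : ℝ) ^ 2 + a ^ 2) / ((cep k : ℝ) * a) := by
      rw [le_div_iff₀ (by positivity)]
      have hint : (s / 2) * ((cep k : ℝ) * a) ≤ (s / 2) * ((4 * s) * a) := by
        apply mul_le_mul_of_nonneg_left _ (by positivity)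
        exact mul_le_mul_of_nonneg_right hc4 ha0.le
      nlinarith [sq_nonneg (s ^ 2 - a)]
    linarith
  unfold Bnd
  rw [← hs]
  apply mul_le_mul_of_nonneg_left (le_trans hsq hexp) (by positivity)

lemma term_eq_zero {j : ℕ} (hj : 1 ≤ j) {a : ℝ} (ha : 0 < a) {k : ℤ}
    (hk : k.natAbs + 1 ≤ 2 ^ (j - 1)) :
    (k : ℝ) ^ 2 * (xiHat j a k - Real.exp (-(((k : ℝ) ^ 2 + a ^ 2) / ((j : ℝ) * a)))) ^ 2
      = 0 := by
  rw [xiHat_eq_of_small hj ha hk]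
  simp

lemma summable_nat_aux : Summable (fun n : ℕ => (n : ℝ) ^ 2
    * Real.exp (-(Real.sqrt (n : ℝ) / 2))) := by
  have hbound : ∀ n : ℕ, (n : ℝ) ^ 2 * Real.exp (-(Real.sqrt (n : ℝ) / 2))
      ≤ (256 * Nat.factorial 8 : ℝ) * (1 / (n : ℝ) ^ 2) := by
    intro n
    rcases Nat.eq_zero_or_pos n with rfl | hn
    · simp
    have hn1 : (1:ℝ) ≤ (n:ℝ) := by exact_mod_cast hn
    set x := Real.sqrt (n : ℝ) / 2 with hx
    have hs0 : 0 ≤ Real.sqrt (n : ℝ) := Real.sqrt_nonneg _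
    have hx0 : 0 ≤ x := by positivity
    have hssq : Real.sqrt (n : ℝ) ^ 2 = (n : ℝ) := Real.sq_sqrt (by positivity)
    -- x ^ 8 / 8! ≤ exp x
    have hexp : x ^ 8 / (Nat.factorial 8 : ℝ) ≤ Real.exp x := by
      have hsum := Real.sum_le_exp_of_nonneg hx0 9
      have hterm : x ^ 8 / (Nat.factorial 8 : ℝ)
          ≤ ∑ i ∈ range 9, x ^ i / (Nat.factorial i : ℝ) := by
        apply Finset.single_le_sum (f := fun i => x ^ i / (Nat.factorial i : ℝ))
          (fun i _ => by positivity)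
        simp
      linarith
    have hx8 : x ^ 8 = (n : ℝ) ^ 4 / 256 := by
      rw [hx]
      rw [div_pow, show (8:ℕ) = 2 * 4 by norm_num, pow_mul, hssq]
      norm_num
    have hexppos : 0 < Real.exp x := Real.exp_pos x
    rw [Real.exp_neg]
    rw [show (n:ℝ)^2 * (Real.exp x)⁻¹ = (n:ℝ)^2 / Real.exp x by ring]
    rw [div_le_iff₀ hexppos]
    have h2 : (n : ℝ) ^ 4 / (256 * (Nat.factorial 8 : ℝ)) ≤ Real.exp x := by
      have : (n : ℝ) ^ 4 / (256 * (Nat.factorial 8 : ℝ)) = x ^ 8 / (Nat.factorial 8 : ℝ) := by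
        rw [hx8]; field_simp
      rw [this]; exact hexp
    have hfac : (0:ℝ) < (Nat.factorial 8 : ℝ) := by positivity
    calc (n:ℝ)^2 = (256 * (Nat.factorial 8:ℝ)) * (1/(n:ℝ)^2) * ((n:ℝ)^4 / (256 * (Nat.factorial 8:ℝ))) := by
          field_simp
      _ ≤ (256 * (Nat.factorial 8:ℝ)) * (1/(n:ℝ)^2) * Real.exp x := by
          apply mul_le_mul_of_nonneg_left h2 (by positivity)
  apply Summable.of_nonneg_of_le (fun n => by positivity) hbound
  apply Summable.mul_left
  exact_mod_cast (Real.summable_one_div_nat_pow (p := 2)).mpr (by norm_num)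

lemma summable_Maj : Summable Maj := by
  apply Summable.of_nat_of_neg <;>
  · apply summable_nat_aux.congr
    intro n
    unfold Maj
    push_cast
    simp [Int.natAbs_neg]


/-- The weighted ℓ²-distance `∑ₖ k²|ξ̂_jᵃ(k) - exp(-(k²+a²)/(ja))|²` is finite and tends to `0`
as `j → ∞` uniformly in `a > 1`, and as `a → ∞` uniformly in `j ∈ ℕ`. -/
theorem xiHat_approx_gaussian :
    (∀ j : ℕ, 1 ≤ j → ∀ a : ℝ, 1 < a →
        Summable fun k : ℤ =>
          (k:ℝ) ^ 2 * (xiHat j a k - Real.exp (-(((k:ℝ) ^ 2 + a ^ 2) / ((j:ℝ) * a)))) ^ 2) ∧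
      (∀ ε > 0, ∃ J : ℕ, ∀ j : ℕ, J ≤ j → ∀ a : ℝ, 1 < a →
        (∑' k : ℤ, (k:ℝ) ^ 2 *
          (xiHat j a k - Real.exp (-(((k:ℝ) ^ 2 + a ^ 2) / ((j:ℝ) * a)))) ^ 2) < ε) ∧
      (∀ ε > 0, ∃ A : ℝ, ∀ a : ℝ, A ≤ a → ∀ j : ℕ, 1 ≤ j →
        (∑' k : ℤ, (k:ℝ) ^ 2 *
          (xiHat j a k - Real.exp (-(((k:ℝ) ^ 2 + a ^ 2) / ((j:ℝ) * a)))) ^ 2) < ε) := by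
  have hterm_nonneg : ∀ (j : ℕ) (a : ℝ) (k : ℤ),
      0 ≤ (k:ℝ) ^ 2 * (xiHat j a k - Real.exp (-(((k:ℝ) ^ 2 + a ^ 2) / ((j:ℝ) * a)))) ^ 2 :=
    fun j a k => by positivity
  have hterm_le_Bnd : ∀ j : ℕ, 1 ≤ j → ∀ a : ℝ, 1 < a → ∀ k : ℤ,
      (k:ℝ) ^ 2 * (xiHat j a k - Real.exp (-(((k:ℝ) ^ 2 + a ^ 2) / ((j:ℝ) * a)))) ^ 2
        ≤ Bnd a k := by
    intro j hj a ha k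
    by_cases hcase : k.natAbs + 1 ≤ 2 ^ (j - 1)
    · rw [term_eq_zero hj (by linarith) hcase]; exact Bnd_nonneg a k
    · exact term_le_Bnd hj ha (by omega)
  have hsummable : ∀ j : ℕ, 1 ≤ j → ∀ a : ℝ, 1 < a →
      Summable fun k : ℤ =>
        (k:ℝ) ^ 2 * (xiHat j a k - Real.exp (-(((k:ℝ) ^ 2 + a ^ 2) / ((j:ℝ) * a)))) ^ 2 := by
    intro j hj a ha
    exact Summable.of_nonneg_of_le (fun k => hterm_nonneg j a k)
      (fun k => (hterm_le_Bnd j hj a ha k).trans (Bnd_le_Maj (by linarith) k)) summable_Maj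
  have hBsummable : ∀ a : ℝ, 0 ≤ a → Summable (Bnd a) := fun a ha =>
    Summable.of_nonneg_of_le (Bnd_nonneg a) (Bnd_le_Maj ha) summable_Maj
  refine ⟨hsummable, ?_, ?_⟩
  · -- j → ∞ uniformly in a
    intro ε hε
    set G : ℕ → ℤ → ℝ := fun j k => if k.natAbs + 1 ≤ 2 ^ (j - 1) then 0 else Maj k with hG
    have hGnonneg : ∀ j k, 0 ≤ G j k := by
      intro j k; rw [hG]; dsimp only; split
      · exact le_refl 0
      · exact Maj_nonneg k
    have hGle : ∀ j k, G j k ≤ Maj k := by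
      intro j k; rw [hG]; dsimp only; split
      · exact Maj_nonneg k
      · exact le_refl _
    have hGsummable : ∀ j, Summable (G j) := fun j =>
      Summable.of_nonneg_of_le (hGnonneg j) (hGle j) summable_Maj
    have htend : Tendsto (fun j => ∑' k : ℤ, G j k) atTop (nhds 0) := by
      have h := tendsto_tsum_of_dominated_convergence (𝓕 := (atTop : Filter ℕ))
        (f := G) (g := fun _ => (0:ℝ)) (bound := Maj) summable_Maj ?_ ?_
      · simpa using h
      · intro k
        have hev : (fun j => G j k) =ᶠ[atTop] (fun _ => (0:ℝ)) := by
          filter_upwards [eventually_ge_atTop (k.natAbs + 1)] with j hjk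
          have hpow : j - 1 < 2 ^ (j - 1) := Nat.lt_two_pow_self
          have h2 : k.natAbs + 1 ≤ 2 ^ (j - 1) := by omega
          simp only [hG, h2, ↓reduceIte]
        exact (tendsto_congr' hev).mpr tendsto_const_nhds
      · apply Eventually.of_forall
        intro j k
        rw [Real.norm_eq_abs, abs_of_nonneg (hGnonneg j k)]
        exact hGle j k
    obtain ⟨J0, hJ0⟩ := eventually_atTop.mp (htend.eventually_lt_const hε)
    refine ⟨max J0 1, fun j hj a ha => ?_⟩
    have hj1 : 1 ≤ j := le_trans (le_max_right _ _) hj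
    have hle : (∑' k : ℤ, (k:ℝ) ^ 2 *
        (xiHat j a k - Real.exp (-(((k:ℝ) ^ 2 + a ^ 2) / ((j:ℝ) * a)))) ^ 2)
        ≤ ∑' k : ℤ, G j k := by
      apply Summable.tsum_le_tsum _ (hsummable j hj1 a ha) (hGsummable j)
      intro k
      by_cases hcase : k.natAbs + 1 ≤ 2 ^ (j - 1)
      · rw [term_eq_zero hj1 (by linarith) hcase]
        exact hGnonneg j k
      · have : G j k = Maj k := by simp only [hG, hcase, ↓reduceIte]
        rw [this]
        exact (term_le_Bnd hj1 ha (by omega)).trans (Bnd_le_Maj (by linarith) k)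
    exact lt_of_le_of_lt hle (hJ0 j (le_trans (le_max_left _ _) hj))
  · -- a → ∞ uniformly in j
    intro ε hε
    have htend : Tendsto (fun a : ℝ => ∑' k : ℤ, Bnd a k) atTop (nhds 0) := by
      have h := tendsto_tsum_of_dominated_convergence (𝓕 := (atTop : Filter ℝ))
        (f := Bnd) (g := fun _ => (0:ℝ)) (bound := Maj) summable_Maj ?_ ?_
      · simpa using h
      · intro k
        have hc : (0:ℝ) < (cep k : ℝ) := by exact_mod_cast cep_pos k
        have h1 : Tendsto (fun a : ℝ => Real.sqrt (k.natAbs : ℝ) / 2 + a / (cep k : ℝ))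
            atTop atTop :=
          tendsto_atTop_add_const_left _ _ (Tendsto.atTop_div_const hc tendsto_id)
        have h2 : Tendsto (fun a : ℝ =>
            Real.exp (-(Real.sqrt (k.natAbs : ℝ) / 2 + a / (cep k : ℝ)))) atTop (nhds 0) :=
          Real.tendsto_exp_atBot.comp (tendsto_neg_atTop_atBot.comp h1)
        have h3 := h2.const_mul ((k:ℝ) ^ 2)
        simpa [Bnd] using h3
      · filter_upwards [eventually_ge_atTop (0:ℝ)] with a ha0 k
        rw [Real.norm_eq_abs, abs_of_nonneg (Bnd_nonneg a k)]
        exact Bnd_le_Maj ha0 k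
    obtain ⟨A0, hA0⟩ := eventually_atTop.mp (htend.eventually_lt_const hε)
    refine ⟨max A0 2, fun a ha j hj => ?_⟩
    have ha2 : 1 < a := by
      have : (2:ℝ) ≤ a := le_trans (le_max_right _ _) ha
      linarith
    have hle : (∑' k : ℤ, (k:ℝ) ^ 2 *
        (xiHat j a k - Real.exp (-(((k:ℝ) ^ 2 + a ^ 2) / ((j:ℝ) * a)))) ^ 2)
        ≤ ∑' k : ℤ, Bnd a k :=
      Summable.tsum_le_tsum (hterm_le_Bnd j hj a ha2) (hsummable j hj a ha2)
        (hBsummable a (by linarith))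
    exact lt_of_le_of_lt hle (hA0 a (le_trans (le_max_left _ _) ha))
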